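/- arXiv:2508.15628 — 2 statements merged into one kernel-verified Lean document; each statement's English description precedes it below -/
import Mathlib

section
/- Let φ : E → E be the F-algebra endomorphism determined by φ(e_i) = ε_i·e_i + w_i for all i ≥ 1. Then φ(w_n) = −ε_n·w_n for every n ≥ 1. -/
/-- `E F` is the Grassmann (exterior) algebra of the infinite-dimensional `F`-vector
space which is free on the index set `{n : ℕ // 1 ≤ n}` of the generators `e₁, e₂, …`. -/
noncomputable abbrev E (F : Type) [Field F] :=
  ExteriorAlgebra F ({n : ℕ // 1 ≤ n} →₀ F)

/-- The generators `e i` (for `i ≥ 1`) of the Grassmann algebra; junk value `0` at `i = 0`. -/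
noncomputable def e (F : Type) [Field F] (i : ℕ) : E F :=
  if h : 1 ≤ i then ExteriorAlgebra.ι F (Finsupp.single ⟨i, h⟩ 1) else 0

/-- `w n = e 1 * e 2 * ⋯ * e (2n+1)`. -/
noncomputable def w (F : Type) [Field F] (n : ℕ) : E F :=
  ((List.range' 1 (2 * n + 1)).map (e F)).prod

/-- The set `I = {2n ∈ ℕ : n > 1 and ∃ m, 2^m ≤ n < 2^m + 2^(m-1)}`. -/
def Iset : Set ℕ :=
  {N | ∃ n : ℕ, N = 2 * n ∧ 1 < n ∧ ∃ m : ℕ, 2 ^ m ≤ n ∧ n < 2 ^ m + 2 ^ (m - 1)}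

open Classical in
/-- The sequence `ε : ℕ → ℤ` with values in `{1, -1}`:
`ε (2n-1) = -1` if `2n ∈ I`, `ε (2n-1) = 1` if `2n ∉ I`, and `ε (2n) = 1` for all `n`. -/
noncomputable def eps (i : ℕ) : ℤ :=
  if Odd i ∧ (i + 1) ∈ Iset then -1 else 1

section alg
variable (F : Type) [Field F]

lemma e_sq (i : ℕ) : e F i * e F i = 0 := by
  unfold e; split
  · exact ExteriorAlgebra.ι_sq_zero _
  · simp

lemma e_swap (i j : ℕ) : e F i * e F j = -(e F j * e F i) := by
  unfold e
  split_ifs with h1 h2 h2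
  · exact eq_neg_of_add_eq_zero_left (ExteriorAlgebra.ι_add_mul_swap _ _)
  all_goals simp

lemma e_mul_prod_zero (L : List ℕ) (i : ℕ) (hmem : i ∈ L) :
    e F i * (L.map (e F)).prod = 0 := by
  induction L with
  | nil => simp at hmem
  | cons j T ih =>
    rw [List.map_cons, List.prod_cons, ← mul_assoc]
    rcases List.mem_cons.mp hmem with h | h
    · subst h; rw [e_sq, zero_mul]
    · rw [e_swap, neg_mul, mul_assoc, ih h, mul_zero, neg_zero]

lemma prod_mul_e (L : List ℕ) (i : ℕ) :
    (L.map (e F)).prod * e F i = ((-1 : ℤ) ^ L.length) • (e F i * (L.map (e F)).prod) := by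
  induction L with
  | nil => simp
  | cons j T ih =>
    rw [List.map_cons, List.prod_cons, List.length_cons, mul_assoc, ih, mul_smul_comm,
      pow_succ, mul_comm ((-1:ℤ)^T.length) (-1:ℤ), mul_smul]
    simp [← mul_assoc, e_swap F i j, neg_smul]

lemma prod_mul_e_zero (L : List ℕ) (i : ℕ) (hmem : i ∈ L) :
    (L.map (e F)).prod * e F i = 0 := by
  rw [prod_mul_e, e_mul_prod_zero F L i hmem, smul_zero]

lemma w_eq_cons (j : ℕ) :
    w F j = e F 1 * ((List.range' 2 (2 * j)).map (e F)).prod := by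
  rw [w, show 2 * j + 1 = (2 * j) + 1 from rfl, List.range'_succ, List.map_cons, List.prod_cons]

lemma prod_mul_w_zero (L : List ℕ) (h1 : 1 ∈ L) (j : ℕ) :
    (L.map (e F)).prod * w F j = 0 := by
  rw [w_eq_cons, ← mul_assoc, prod_mul_e_zero F L 1 h1, zero_mul]
end alg

section expand
variable (F : Type) [Field F]

lemma mem_range'_one {i m : ℕ} (h1 : 1 ≤ i) (h2 : i ≤ m) : i ∈ List.range' 1 m := by
  rw [List.mem_range'_1]; omega

lemma expand : ∀ m : ℕ, 2 ≤ m →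
    ((List.range' 1 m).map (fun i => eps i • e F i + w F i)).prod =
      (((List.range' 1 m).map eps).prod) • ((List.range' 1 m).map (e F)).prod := by
  intro m hm
  induction m, hm using Nat.le_induction with
  | base =>
    have h12 : List.range' 1 2 = [1, 2] := rfl
    rw [h12]
    simp only [List.map_cons, List.map_nil, List.prod_cons, List.prod_nil, mul_one]
    rw [add_mul, mul_add, mul_add, smul_mul_assoc, smul_mul_assoc, mul_smul_comm,
      show e F 1 * w F 2 = 0 from e_mul_prod_zero F _ 1 (mem_range'_one (by norm_num) (by norm_num)),
      show w F 1 * (eps 2 • e F 2) = eps 2 • (w F 1 * e F 2) from mul_smul_comm _ _ _,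
      show w F 1 * e F 2 = 0 from prod_mul_e_zero F _ 2 (mem_range'_one (by norm_num) (by norm_num)),
      show w F 1 * w F 2 = 0 from prod_mul_w_zero F _ (mem_range'_one (by norm_num) (by norm_num)) 2]
    simp [mul_smul, mul_assoc]
  | succ m hm ih =>
    rw [List.range'_concat]
    simp only [one_mul, List.map_append, List.prod_append, List.map_cons, List.map_nil,
      List.prod_cons, List.prod_nil, mul_one, ih]
    rw [smul_mul_assoc, mul_add, mul_smul_comm,
      prod_mul_w_zero F _ (mem_range'_one (by norm_num) (by omega)) (1 + m), add_zero,
      mul_smul]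

lemma phi_w (φ : E F →ₐ[F] E F)
    (hφ : ∀ i : ℕ, 1 ≤ i → φ (e F i) = eps i • e F i + w F i) (n : ℕ) (hn : 1 ≤ n) :
    φ (w F n) = (((List.range' 1 (2 * n + 1)).map eps).prod) • w F n := by
  conv_lhs => rw [w, map_list_prod, List.map_map]
  rw [show (List.range' 1 (2*n+1)).map (⇑φ ∘ e F) =
      (List.range' 1 (2*n+1)).map (fun i => eps i • e F i + w F i) from
    List.map_congr_left fun i hi => hφ i (List.mem_range'_1.mp hi).1]
  rw [expand F _ (by omega), w]
end expand


section arith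

/-- auxiliary predicate -/
def Sp (k : ℕ) : Prop := ∃ m : ℕ, 2 ^ m ≤ k ∧ k < 2 ^ m + 2 ^ (m - 1)

lemma iset_iff (n : ℕ) : (2 * n) ∈ Iset ↔ (1 < n ∧ Sp n) := by
  constructor
  · rintro ⟨n', hn', h1, hS⟩
    obtain rfl : n' = n := by omega
    exact ⟨h1, hS⟩
  · rintro ⟨h1, hS⟩; exact ⟨n, rfl, h1, hS⟩

open Classical in
lemma eps_odd (k : ℕ) : eps (2 * k + 1) = if 1 < k + 1 ∧ Sp (k + 1) then -1 else 1 := by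
  unfold eps
  by_cases h : 1 < k + 1 ∧ Sp (k + 1)
  · rw [if_pos, if_pos h]
    exact ⟨⟨k, by omega⟩, show 2 * k + 1 + 1 ∈ Iset from
      (by rw [show 2 * k + 1 + 1 = 2 * (k + 1) from by ring]; exact (iset_iff _).mpr h)⟩
  · rw [if_neg, if_neg h]
    rintro ⟨-, hI⟩
    rw [show 2 * k + 1 + 1 = 2 * (k + 1) from by ring] at hI
    exact h ((iset_iff _).mp hI)

lemma eps_even (k : ℕ) : eps (2 * k) = 1 := by
  unfold eps
  rw [if_neg]
  rintro ⟨⟨t, ht⟩, -⟩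
  omega

lemma not_sp3 : ¬ Sp 3 := by
  rintro ⟨m, h1, h2⟩
  have hm : m ≤ 1 := by
    by_contra h
    have : 2 ^ 2 ≤ 2 ^ m := Nat.pow_le_pow_right (by norm_num) (by omega)
    omega
  interval_cases m <;> simp_all

lemma pow_h1 (m' : ℕ) : 2 ^ (m' + 1) = 2 * 2 ^ m' := by ring
lemma pow_h2 (m' : ℕ) : 2 ^ (m' + 2) = 4 * 2 ^ m' := by ring

lemma sp_small (k m : ℕ) (hk : 2 ≤ k) (h1 : 2 ^ m ≤ 2 * k)
    (h2 : 2 * k < 2 ^ m + 2 ^ (m - 1)) : 2 ≤ m := by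
  rcases m with _ | _ | m
  · norm_num at h1 h2; omega
  · norm_num at h1 h2; omega
  · omega

lemma sp_small' (k m : ℕ) (hk : 2 ≤ k) (h1 : 2 ^ m ≤ k)
    (h2 : k < 2 ^ m + 2 ^ (m - 1)) : 1 ≤ m := by
  rcases m with _ | m
  · norm_num at h1 h2; omega
  · omega

lemma sp_two_mul (k : ℕ) (hk : 2 ≤ k) : Sp (2 * k) ↔ Sp k := by
  constructor
  · rintro ⟨m, h1, h2⟩
    obtain ⟨m', rfl⟩ : ∃ m', m = m' + 2 := ⟨m - 2, by
      have := sp_small k m hk h1 (by omega); omega⟩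
    rw [pow_h2] at h1 h2
    rw [show m' + 2 - 1 = m' + 1 from by omega, pow_h1] at h2
    exact ⟨m' + 1, by rw [pow_h1]; omega,
      by rw [show m' + 1 - 1 = m' from by omega, pow_h1]; omega⟩
  · rintro ⟨m, h1, h2⟩
    obtain ⟨m', rfl⟩ : ∃ m', m = m' + 1 := ⟨m - 1, by have := sp_small' k m hk h1 h2; omega⟩
    rw [pow_h1] at h1 h2
    rw [show m' + 1 - 1 = m' from by omega] at h2
    exact ⟨m' + 2, by rw [pow_h2]; omega,
      by rw [pow_h2, show m' + 2 - 1 = m' + 1 from by omega, pow_h1]; omega⟩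

lemma sp_two_mul_add_one (k : ℕ) (hk : 2 ≤ k) : Sp (2 * k + 1) ↔ Sp k := by
  constructor
  · rintro ⟨m, h1, h2⟩
    have hm2 : 2 ≤ m := by
      by_contra h
      interval_cases m <;> simp_all <;> omega
    obtain ⟨m', rfl⟩ : ∃ m', m = m' + 2 := ⟨m - 2, by omega⟩
    rw [pow_h2] at h1 h2
    rw [show m' + 2 - 1 = m' + 1 from by omega, pow_h1] at h2
    exact ⟨m' + 1, by rw [pow_h1]; omega,
      by rw [show m' + 1 - 1 = m' from by omega, pow_h1]; omega⟩
  · rintro ⟨m, h1, h2⟩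
    obtain ⟨m', rfl⟩ : ∃ m', m = m' + 1 := ⟨m - 1, by have := sp_small' k m hk h1 h2; omega⟩
    rw [pow_h1] at h1 h2
    rw [show m' + 1 - 1 = m' from by omega] at h2
    exact ⟨m' + 2, by rw [pow_h2]; omega,
      by rw [pow_h2, show m' + 2 - 1 = m' + 1 from by omega, pow_h1]; omega⟩

lemma keyK (M : ℕ) (hM : 1 ≤ M) : eps (4 * M + 1) = eps (2 * M - 1) := by
  obtain ⟨M', rfl⟩ : ∃ M', M = M' + 1 := ⟨M - 1, by omega⟩
  rw [show 4 * (M' + 1) + 1 = 2 * (2 * M' + 2) + 1 from by ring,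
    show 2 * (M' + 1) - 1 = 2 * M' + 1 from by omega, show 2 * M' + 1 = 2 * M' + 1 from rfl,
    eps_odd, eps_odd]
  rcases Nat.eq_zero_or_pos M' with rfl | hM'
  · rw [if_neg (by rintro ⟨-, h2⟩; exact not_sp3 (by simpa using h2)),
      if_neg (by rintro ⟨h1, -⟩; omega)]
  · have hiff : Sp (2 * M' + 2 + 1) ↔ Sp (M' + 1) := by
      rw [show 2 * M' + 2 + 1 = 2 * (M' + 1) + 1 from by ring]
      exact sp_two_mul_add_one (M' + 1) (by omega)
    by_cases h : Sp (M' + 1)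
    · rw [if_pos ⟨by omega, hiff.mpr h⟩, if_pos ⟨by omega, h⟩]
    · rw [if_neg, if_neg] <;> rintro ⟨-, hs⟩
      · exact h hs
      · exact h (hiff.mp hs)

lemma keyK2 (M : ℕ) (hM : 1 ≤ M) : eps (4 * M + 3) = eps (2 * M + 1) := by
  rw [show 4 * M + 3 = 2 * (2 * M + 1) + 1 from by ring, eps_odd, eps_odd]
  have hiff : Sp (2 * M + 1 + 1) ↔ Sp (M + 1) := by
    rw [show 2 * M + 1 + 1 = 2 * (M + 1) from by ring]
    exact sp_two_mul (M + 1) (by omega)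
  by_cases h : Sp (M + 1)
  · rw [if_pos ⟨by omega, hiff.mpr h⟩, if_pos ⟨by omega, h⟩]
  · rw [if_neg, if_neg] <;> rintro ⟨-, hs⟩
    · exact h hs
    · exact h (hiff.mp hs)

lemma eps_sq (i : ℕ) : eps i * eps i = 1 := by
  unfold eps; split <;> norm_num

noncomputable def Q (N : ℕ) : ℤ := ((List.range' 1 N).map eps).prod

lemma Q_succ (N : ℕ) : Q (N + 1) = Q N * eps (1 + N) := by
  rw [Q, Q, List.range'_concat]
  simp

lemma eps_one : eps 1 = 1 := by
  have := eps_odd 0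
  rw [if_neg (by omega)] at this
  simpa using this

lemma eps_three : eps 3 = -1 := by
  have h : Sp 2 := ⟨1, by norm_num⟩
  have := eps_odd 1
  rw [if_pos ⟨by omega, h⟩] at this
  simpa using this

lemma Q_C : ∀ M : ℕ, 1 ≤ M → Q (4 * M - 1) = -eps (2 * M - 1) := by
  intro M hM
  induction M, hM using Nat.le_induction with
  | base =>
    show Q 3 = -eps 1
    rw [Q, show List.range' 1 3 = [1, 2, 3] from rfl]
    simp [eps_one, eps_three, show eps 2 = 1 from eps_even 1]
  | succ M hM ih =>
    have h1 : 4 * (M + 1) - 1 = (4 * M - 1) + 1 + 1 + 1 + 1 := by omega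
    rw [h1, Q_succ, Q_succ, Q_succ, Q_succ, ih,
      show 1 + (4 * M - 1) = 2 * (2 * M) from by omega,
      show 1 + (4 * M - 1 + 1) = 4 * M + 1 from by omega,
      show 1 + (4 * M - 1 + 1 + 1) = 2 * (2 * M + 1) from by omega,
      show 1 + (4 * M - 1 + 1 + 1 + 1) = 4 * M + 3 from by omega,
      eps_even, eps_even, keyK M hM, keyK2 M hM,
      show 2 * (M + 1) - 1 = 2 * M + 1 from by omega]
    linear_combination (-eps (2 * M + 1)) * eps_sq (2 * M - 1)

lemma main_arith (n : ℕ) (hn : 1 ≤ n) : Q (2 * n + 1) = -eps n := by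
  rcases Nat.even_or_odd n with ⟨M, hM⟩ | ⟨M, hM⟩
  · have hM1 : 1 ≤ M := by omega
    have h1 : 2 * n + 1 = (4 * M - 1) + 1 + 1 := by omega
    rw [h1, Q_succ, Q_succ, Q_C M hM1,
      show 1 + (4 * M - 1) = 2 * (2 * M) from by omega,
      show 1 + (4 * M - 1 + 1) = 4 * M + 1 from by omega,
      eps_even, keyK M hM1, show n = 2 * M from by omega, eps_even]
    linear_combination (-1 : ℤ) * eps_sq (2 * M - 1)
  · have h1 : 2 * n + 1 = 4 * (M + 1) - 1 := by omega
    rw [h1, Q_C (M + 1) (by omega), show 2 * (M + 1) - 1 = n from by omega]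

end arith

/-- if `φ : E → E` is the `F`-algebra endomorphism determined by
`φ (e i) = ε i • e i + w i` for all `i ≥ 1`, then `φ (w n) = -ε n • w n` for every `n ≥ 1`. -/
theorem stmt5 (F : Type) [Field F] (hchar : (2 : F) ≠ 0)
    (φ : E F →ₐ[F] E F) (hφ : ∀ i : ℕ, 1 ≤ i → φ (e F i) = eps i • e F i + w F i) :
    ∀ n : ℕ, 1 ≤ n → φ (w F n) = (-eps n) • w F n := by
  intro n hn
  rw [phi_w F φ hφ n hn, show ((List.range' 1 (2 * n + 1)).map eps).prod = Q (2 * n + 1) from rfl,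
    main_arith n hn]
end

section
/- Let φ : E → E be the F-algebra automorphism determined by φ(e₁) = −e₁ and φ(e_n) = −e_n + 2·e₁·e_n for n > 1, and let σ : E → E be the canonical grade involution of E, i.e. the unique F-algebra automorphism with σ(e_i) = −e_i for all i. Then there exists an F-algebra automorphism θ of E such that θ∘φ = σ∘θ; in particular the superalgebra E_φ induced by φ is ℤ₂-graded isomorphic to the canonical superalgebra E_can induced by σ. -/
section aux
variable (F : Type) [Field F]

open ExteriorAlgebra

/-- the linear map `v ↦ ι v + e₁ * ι v` (or with sign `c`). -/
noncomputable def fmap (c : F) : ({n : ℕ // 1 ≤ n} →₀ F) →ₗ[F] E F :=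
  ExteriorAlgebra.ι F + c • (LinearMap.mulLeft F (e F 1)).comp (ExteriorAlgebra.ι F)

lemma fmap_apply (c : F) (v) : fmap F c v = ι F v + c • (e F 1 * ι F v) := rfl

lemma fmap_sq (c : F) (v) : fmap F c v * fmap F c v = 0 := by
  have h1 : ι F v * ι F v = (0 : E F) := ι_sq_zero v
  have e1 : e F 1 = ι F (Finsupp.single ⟨1, le_refl 1⟩ 1) := by simp [e]
  have h2 : ι F v * e F 1 = - (e F 1 * ι F v) := by
    rw [e1]; have := ι_add_mul_swap (R := F) v (Finsupp.single ⟨1, le_refl 1⟩ 1)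
    rw [← e1] at this ⊢; linear_combination (norm := noncomm_ring) this
  have hf : fmap F c v = (1 + c • e F 1) * ι F v := by
    rw [fmap_apply, add_mul, one_mul, smul_mul_assoc]
  have key : ι F v * (1 + c • e F 1) = (1 - c • e F 1) * ι F v := by
    rw [mul_add, mul_one, mul_smul_comm, h2, sub_mul, one_mul, smul_mul_assoc,
      smul_neg, sub_eq_add_neg]
  calc fmap F c v * fmap F c v
      = (1 + c • e F 1) * (ι F v * (1 + c • e F 1)) * ι F v := by
        rw [hf]; noncomm_ring
    _ = (1 + c • e F 1) * (1 - c • e F 1) * (ι F v * ι F v) := by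
        rw [key]; noncomm_ring
    _ = 0 := by rw [h1, mul_zero]

noncomputable def th (c : F) : E F →ₐ[F] E F :=
  ExteriorAlgebra.lift F ⟨fmap F c, fmap_sq F c⟩

lemma th_ι (c : F) (v) : th F c (ι F v) = ι F v + c • (e F 1 * ι F v) := by
  unfold th; exact ExteriorAlgebra.lift_ι_apply F (fmap F c) (fmap_sq F c) v

lemma th_e1 (c : F) : th F c (e F 1) = e F 1 := by
  have e1 : e F 1 = ι F (Finsupp.single ⟨1, le_refl 1⟩ 1) := by simp [e]
  rw [e1, th_ι, ← e1]
  have h3 : e F 1 * e F 1 = 0 := by rw [e1]; exact ι_sq_zero _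
  simp [h3]

lemma th_comp (c : F) : (th F c).comp (th F (-c)) = AlgHom.id F (E F) := by
  apply ExteriorAlgebra.hom_ext
  ext v
  simp only [LinearMap.comp_apply, AlgHom.toLinearMap_apply, AlgHom.coe_id, id_eq,
    LinearMap.id_apply, AlgHom.comp_apply]
  rw [th_ι, map_add, th_ι, map_smul, map_mul, th_e1, th_ι]
  have e1 : e F 1 = ι F (Finsupp.single ⟨1, le_refl 1⟩ 1) := by simp [e]
  have h3 : e F 1 * e F 1 = 0 := by rw [e1]; exact ι_sq_zero _
  rw [mul_add]
  rw [mul_smul_comm, ← mul_assoc, h3]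
  simp

end aux

/-- let `φ` be the `F`-algebra automorphism of `E` determined by
`φ (e 1) = -e 1` and `φ (e n) = -e n + 2 • e 1 * e n` for `n > 1`, and let `σ` be the
canonical grade involution, determined by `σ (e i) = -e i` for all `i ≥ 1`. Then there is
an `F`-algebra automorphism `θ` of `E` with `θ ∘ φ = σ ∘ θ`; in particular the
superalgebra `E_φ` is `ℤ₂`-graded isomorphic to the canonical superalgebra `E_can`. -/
theorem stmt13 (F : Type) [Field F] (hchar : (2 : F) ≠ 0)
    (φ σ : E F →ₐ[F] E F)
    (h1 : φ (e F 1) = -e F 1)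
    (h2 : ∀ n : ℕ, 1 < n → φ (e F n) = -e F n + (2 : F) • (e F 1 * e F n))
    (hσ : ∀ i : ℕ, 1 ≤ i → σ (e F i) = -e F i) :
    ∃ θ : E F ≃ₐ[F] E F, ∀ x : E F, θ (φ x) = σ (θ x) := by
  refine ⟨AlgEquiv.ofAlgHom (th F 1) (th F (-1)) (by simpa using th_comp F 1)
    (by simpa using th_comp F (-1)), fun x => ?_⟩
  simp only [AlgEquiv.ofAlgHom]
  change ((th F 1).comp φ) x = (σ.comp (th F 1)) x
  revert x
  rw [← AlgHom.ext_iff]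
  apply ExteriorAlgebra.hom_ext
  apply Finsupp.lhom_ext'
  intro i
  apply LinearMap.ext_ring
  simp only [LinearMap.comp_apply, AlgHom.toLinearMap_apply, Finsupp.lsingle_apply]
  have hei : ExteriorAlgebra.ι F (Finsupp.single i (1:F)) = e F i.1 := by
    simp [e, i.2]
  rw [hei]
  have hθ : ∀ j : ℕ, 1 ≤ j → th F 1 (e F j) = e F j + e F 1 * e F j := by
    intro j hj
    have : e F j = ExteriorAlgebra.ι F (Finsupp.single ⟨j, hj⟩ 1) := by simp [e, hj]
    rw [this, th_ι]; simp [← this]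
  have h3 : e F 1 * e F 1 = 0 := by
    have e1 : e F 1 = ExteriorAlgebra.ι F (Finsupp.single ⟨1, le_refl 1⟩ 1) := by simp [e]
    rw [e1]; exact ExteriorAlgebra.ι_sq_zero _
  rw [AlgHom.comp_apply, AlgHom.comp_apply]
  rcases eq_or_lt_of_le i.2 with h | h
  · -- i = 1
    have : i.1 = 1 := h.symm
    rw [this, h1, map_neg, th_e1, hσ 1 le_rfl]
  · -- i > 1
    rw [h2 i.1 h, map_add, map_neg, map_smul, map_mul, th_e1, hθ i.1 i.2,
      map_add, map_mul, hσ 1 le_rfl, hσ i.1 i.2]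
    rw [mul_add, ← mul_assoc, h3, zero_mul, add_zero, neg_mul_neg, two_smul]
    abel
end
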